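/- arXiv:1401.6211 — 2 statements merged into one kernel-verified Lean document; each statement's English description precedes it below -/
import Mathlib

section
/- Let f : A → B be a differential homomorphism of Keigher differential rings. If f has the going-down property for prime ideals, then f has the going-down property for prime differential ideals: given prime differential ideals 𝔭₁ ⊆ 𝔭₂ of A and a prime differential ideal 𝔮₂ of B with f⁻¹(𝔮₂) = 𝔭₂, there exists a prime differential ideal 𝔮₁ ⊆ 𝔮₂ of B with f⁻¹(𝔮₁) = 𝔭₁. -/
/-- A derivation on a commutative ring, as a predicate. -/
def IsDerivationFn {R : Type*} [CommRing R] (d : R → R) : Prop :=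
  (∀ a b : R, d (a + b) = d a + d b) ∧ (∀ a b : R, d (a * b) = a * d b + d a * b)

/-- A differential ideal: an ideal stable under the derivation. -/
def IsDiffIdeal {R : Type*} [CommRing R] (d : R → R) (I : Ideal R) : Prop :=
  ∀ x ∈ I, d x ∈ I

/-- A Keigher ring: the radical of every differential ideal is differential. -/
def IsKeigher {R : Type*} [CommRing R] (d : R → R) : Prop :=
  IsDerivationFn d ∧ ∀ I : Ideal R, IsDiffIdeal d I → IsDiffIdeal d I.radical

lemma IsDerivationFn.map_zero {R : Type*} [CommRing R] {d : R → R}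
    (hd : IsDerivationFn d) : d 0 = 0 := by
  have := hd.1 0 0
  simp at this
  exact this

/-- The span of a set all of whose elements have derivative back in the span
is a differential ideal. -/
lemma isDiffIdeal_span {R : Type*} [CommRing R] {d : R → R} (hd : IsDerivationFn d)
    (S : Set R) (h : ∀ s ∈ S, d s ∈ Ideal.span S) : IsDiffIdeal d (Ideal.span S) := by
  intro x hx
  induction hx using Submodule.span_induction with
  | mem x hxS => exact h x hxS
  | zero => rw [hd.map_zero]; exact Ideal.zero_mem _
  | add x y hx hy ihx ihy => rw [hd.1]; exact Ideal.add_mem _ ihx ihy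
  | smul a x hx ih =>
      have : d (a • x) = a * d x + d a * x := by
        simpa [smul_eq_mul] using hd.2 a x
      rw [this]
      exact Ideal.add_mem _ (Ideal.mul_mem_left _ _ ih)
        (Ideal.mul_mem_left _ _ hx)

/-- In a radical differential ideal, if `x*y ∈ I` then `x * d y ∈ I`. -/
lemma mul_deriv_mem {R : Type*} [CommRing R] {d : R → R} (hd : IsDerivationFn d)
    {I : Ideal R} (hrad : I.radical = I) (hdI : IsDiffIdeal d I)
    {x y : R} (hxy : x * y ∈ I) : x * d y ∈ I := by
  have h1 : x * d y + d x * y ∈ I := by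
    have := hdI _ hxy
    rwa [hd.2] at this
  have h2 : (x * d y) * (x * d y) + (x * d y) * (d x * y) ∈ I := by
    have := I.mul_mem_left (x * d y) h1
    rwa [mul_add] at this
  have h3 : (x * d y) * (d x * y) ∈ I := by
    have : (x * d y) * (d x * y) = (x * y) * (d x * d y) := by ring
    rw [this]
    exact I.mul_mem_right _ hxy
  have h4 : (x * d y) ^ 2 ∈ I := by
    have := I.sub_mem h2 h3
    simpa [pow_two] using this
  rw [← hrad]
  exact ⟨2, h4⟩

lemma iter_deriv_mul_mem {R : Type*} [CommRing R] {d : R → R} (hd : IsDerivationFn d)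
    {I : Ideal R} (hrad : I.radical = I) (hdI : IsDiffIdeal d I)
    {x y : R} (hxy : x * y ∈ I) : ∀ k l : ℕ, d^[k] x * d^[l] y ∈ I := by
  intro k
  induction k with
  | zero =>
      intro l
      induction l with
      | zero => simpa using hxy
      | succ l ih =>
          rw [Function.iterate_succ_apply']
          exact mul_deriv_mem hd hrad hdI ih
  | succ k ih =>
      intro l
      rw [Function.iterate_succ_apply']
      have := mul_deriv_mem hd hrad hdI (by rw [mul_comm]; exact ih l)
      rwa [mul_comm] at this

/-- going-down for primes implies going-down for prime differential
ideals. -/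
theorem going_down_diff_of_going_down
    {A B : Type*} [CommRing A] [CommRing B]
    (dA : A → A) (dB : B → B) (hA : IsKeigher dA) (hB : IsKeigher dB)
    (f : A →+* B) (hf : ∀ a : A, f (dA a) = dB (f a))
    (hGD : ∀ 𝔭₁ 𝔭₂ : Ideal A, 𝔭₁.IsPrime → 𝔭₂.IsPrime → 𝔭₁ ≤ 𝔭₂ →
      ∀ 𝔮₂ : Ideal B, 𝔮₂.IsPrime → Ideal.comap f 𝔮₂ = 𝔭₂ →
        ∃ 𝔮₁ : Ideal B, 𝔮₁.IsPrime ∧ 𝔮₁ ≤ 𝔮₂ ∧ Ideal.comap f 𝔮₁ = 𝔭₁)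
    (𝔭₁ 𝔭₂ : Ideal A) (h₁ : 𝔭₁.IsPrime) (h₂ : 𝔭₂.IsPrime) (h₁₂ : 𝔭₁ ≤ 𝔭₂)
    (h₁d : IsDiffIdeal dA 𝔭₁) (h₂d : IsDiffIdeal dA 𝔭₂)
    (𝔮₂ : Ideal B) (hq₂ : 𝔮₂.IsPrime) (hq₂d : IsDiffIdeal dB 𝔮₂)
    (hover : Ideal.comap f 𝔮₂ = 𝔭₂) :
    ∃ 𝔮₁ : Ideal B, 𝔮₁.IsPrime ∧ IsDiffIdeal dB 𝔮₁ ∧ 𝔮₁ ≤ 𝔮₂ ∧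
      Ideal.comap f 𝔮₁ = 𝔭₁ := by
  classical
  -- The multiplicative set T
  set T : Set B := {b | ∃ s, s ∉ 𝔭₁ ∧ ∃ t, t ∉ 𝔮₂ ∧ b = f s * t} with hT
  have hTone : (1 : B) ∈ T := by
    refine ⟨1, h₁.1 ∘ (Ideal.eq_top_iff_one 𝔭₁).mpr, 1, hq₂.1 ∘ (Ideal.eq_top_iff_one 𝔮₂).mpr, by simp⟩
  have hTmul : ∀ x ∈ T, ∀ y ∈ T, x * y ∈ T := by
    rintro x ⟨s, hs, t, ht, rfl⟩ y ⟨s', hs', t', ht', rfl⟩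
    refine ⟨s * s', fun h => ?_, t * t', fun h => ?_, by rw [map_mul]; ring⟩
    · rcases h₁.mem_or_mem h with h | h <;> [exact hs h; exact hs' h]
    · rcases hq₂.mem_or_mem h with h | h <;> [exact ht h; exact ht' h]
  have hTpow : ∀ x ∈ T, ∀ n : ℕ, x ^ (n + 1) ∈ T := by
    intro x hx n
    induction n with
    | zero => simpa using hx
    | succ n ih => rw [pow_succ]; exact hTmul _ ih _ hx
  -- any element outside 𝔮₂ lies in T
  have hTq₂ : ∀ t : B, t ∉ 𝔮₂ → t ∈ T := by
    intro t ht
    exact ⟨1, h₁.1 ∘ (Ideal.eq_top_iff_one 𝔭₁).mpr, t, ht, by simp⟩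
  -- the base differential ideal: map f 𝔭₁
  have hbase_diff : IsDiffIdeal dB (Ideal.map f 𝔭₁) := by
    rw [Ideal.map]
    apply isDiffIdeal_span hB.1
    rintro s ⟨a, ha, rfl⟩
    exact Ideal.subset_span ⟨dA a, h₁d a ha, hf a⟩
  -- base is disjoint from T, using classical going-down
  obtain ⟨𝔮, hq_prime, hq_le, hq_comap⟩ := hGD 𝔭₁ 𝔭₂ h₁ h₂ h₁₂ 𝔮₂ hq₂ hover
  have hq_disj : ∀ x ∈ T, x ∉ 𝔮 := by
    rintro x ⟨s, hs, t, ht, rfl⟩ hmem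
    rcases hq_prime.mem_or_mem hmem with h | h
    · exact hs (by rwa [← hq_comap])
    · exact ht (hq_le h)
  have hbase_le : Ideal.map f 𝔭₁ ≤ 𝔮 := Ideal.map_le_iff_le_comap.mpr (le_of_eq hq_comap.symm)
  -- the collection for Zorn's lemma
  set 𝒮 : Set (Ideal B) :=
    {J | IsDiffIdeal dB J ∧ Ideal.map f 𝔭₁ ≤ J ∧ ∀ x ∈ T, x ∉ J} with h𝒮
  have hbase_mem : Ideal.map f 𝔭₁ ∈ 𝒮 :=
    ⟨hbase_diff, le_rfl, fun x hx hmem => hq_disj x hx (hbase_le hmem)⟩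
  obtain ⟨𝔮₁, hle, hmax⟩ := zorn_le_nonempty₀ 𝒮 (fun c hc hchain y hy => by
    refine ⟨sSup c, ⟨?_, ?_, ?_⟩, fun z hz => le_sSup hz⟩
    · intro x hx
      have hne : c.Nonempty := ⟨y, hy⟩
      have hdir : DirectedOn (· ≤ ·) c := hchain.directedOn
      rw [Submodule.mem_sSup_of_directed hne hdir] at hx ⊢
      obtain ⟨J, hJ, hxJ⟩ := hx
      exact ⟨J, hJ, (hc hJ).1 x hxJ⟩
    · exact le_trans (hc hy).2.1 (le_sSup hy)
    · intro x hx hmem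
      have hne : c.Nonempty := ⟨y, hy⟩
      rw [Submodule.mem_sSup_of_directed hne hchain.directedOn] at hmem
      obtain ⟨J, hJ, hxJ⟩ := hmem
      exact (hc hJ).2.2 x hx hxJ) _ hbase_mem
  obtain ⟨⟨hq₁_diff, hq₁_base, hq₁_disj⟩, hq₁_max⟩ := hmax
  -- 𝔮₁ is radical
  have hq₁_rad : 𝔮₁.radical = 𝔮₁ := by
    refine le_antisymm ?_ Ideal.le_radical
    have : 𝔮₁.radical ∈ 𝒮 := by
      refine ⟨hB.2 _ hq₁_diff, le_trans hq₁_base Ideal.le_radical, ?_⟩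
      rintro x hx ⟨n, hn⟩
      rcases n with _ | n
      · simp only [pow_zero] at hn
        exact hq₁_disj 1 hTone ((Ideal.eq_top_iff_one _).mpr hn ▸ Submodule.mem_top)
      · exact hq₁_disj _ (hTpow x hx n) hn
    exact hq₁_max this Ideal.le_radical
  -- 𝔮₁ is prime
  have hq₁_ne_top : 𝔮₁ ≠ ⊤ := fun h =>
    hq₁_disj 1 hTone (h ▸ Submodule.mem_top)
  have key : ∀ a : B, a ∉ 𝔮₁ → ∃ s ∈ T, s ∈ (Ideal.span (↑𝔮₁ ∪ Set.range fun n => dB^[n] a)).radical := by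
    intro a ha
    set Ia := Ideal.span (↑𝔮₁ ∪ Set.range fun n => dB^[n] a) with hIa
    have hIa_diff : IsDiffIdeal dB Ia := by
      apply isDiffIdeal_span hB.1
      rintro s (hs | ⟨n, rfl⟩)
      · exact Ideal.subset_span (Or.inl (hq₁_diff s hs))
      · exact Ideal.subset_span (Or.inr ⟨n + 1, Function.iterate_succ_apply' dB n a⟩)
    by_contra hcon
    push_neg at hcon
    have hq₁_le_Ia : 𝔮₁ ≤ Ia := fun z hz => Ideal.subset_span (Or.inl hz)
    have hle' : 𝔮₁ ≤ Ia.radical := le_trans hq₁_le_Ia Ideal.le_radical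
    have : Ia.radical ∈ 𝒮 :=
      ⟨hB.2 _ hIa_diff, le_trans hq₁_base hle', fun x hx hmem => hcon x hx hmem⟩
    have heq := hq₁_max this hle'
    have haIa : a ∈ Ia.radical :=
      Ideal.le_radical (Ideal.subset_span (Or.inr ⟨0, rfl⟩))
    exact ha (heq haIa)
  have hq₁_prime : 𝔮₁.IsPrime := by
    refine ⟨hq₁_ne_top, ?_⟩
    intro x y hxy
    by_contra hcon
    push_neg at hcon
    obtain ⟨hx, hy⟩ := hcon
    obtain ⟨s, hsT, n, hsn⟩ := key x hx
    obtain ⟨t, htT, m, htm⟩ := key y hy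
    -- show s^n * t^m ∈ 𝔮₁, contradiction with s*t ∈ T
    set Ix := Ideal.span (↑𝔮₁ ∪ Set.range fun k => dB^[k] x) with hIx
    set Iy := Ideal.span (↑𝔮₁ ∪ Set.range fun k => dB^[k] y) with hIy
    have hprod : ∀ u ∈ Ix, ∀ v ∈ Iy, u * v ∈ 𝔮₁ := by
      intro u hu
      induction hu using Submodule.span_induction with
      | mem u huS =>
          intro v hv
          induction hv using Submodule.span_induction with
          | mem v hvS =>
              rcases huS with hu' | ⟨k, rfl⟩
              · exact Ideal.mul_mem_right _ _ hu'
              rcases hvS with hv' | ⟨l, rfl⟩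
              · exact Ideal.mul_mem_left _ _ hv'
              · exact iter_deriv_mul_mem hB.1 hq₁_rad hq₁_diff hxy k l
          | zero => simpa using Ideal.zero_mem 𝔮₁
          | add v w _ _ ihv ihw => rw [mul_add]; exact Ideal.add_mem _ ihv ihw
          | smul c v _ ih =>
              rw [smul_eq_mul, show u * (c * v) = c * (u * v) by ring]
              exact Ideal.mul_mem_left _ _ ih
      | zero => intro v _; simpa using Ideal.zero_mem 𝔮₁
      | add u w _ _ ihu ihw =>
          intro v hv
          rw [add_mul]; exact Ideal.add_mem _ (ihu v hv) (ihw v hv)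
      | smul c u _ ih =>
          intro v hv
          rw [smul_eq_mul, mul_assoc]
          exact Ideal.mul_mem_left _ _ (ih v hv)
    have hst : s * t ∈ 𝔮₁ := by
      rw [← hq₁_rad]
      refine ⟨n + m, ?_⟩
      have h1 : s ^ (n + m) ∈ Ix := by
        rw [pow_add]; exact Ideal.mul_mem_right _ _ hsn
      have h2 : t ^ (n + m) ∈ Iy := by
        rw [add_comm n m, pow_add]; exact Ideal.mul_mem_right _ _ htm
      rw [mul_pow]
      exact hprod _ h1 _ h2
    exact hq₁_disj _ (hTmul s hsT t htT) hst
  refine ⟨𝔮₁, hq₁_prime, hq₁_diff, ?_, ?_⟩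
  · intro x hx
    by_contra hxq₂
    exact hq₁_disj x (hTq₂ x hxq₂) hx
  · apply le_antisymm
    · intro a ha
      by_contra ha'
      have : f a ∈ T := ⟨a, ha', 1, hq₂.1 ∘ (Ideal.eq_top_iff_one 𝔮₂).mpr, by simp⟩
      exact hq₁_disj _ this ha
    · exact Ideal.map_le_iff_le_comap.mp hq₁_base
end

section
/- Let A ⊆ B be an extension of differential integral domains of characteristic zero with B integral over A. Then the inclusion has the going-up property for prime differential ideals: if 𝔭₁ ⊆ 𝔭₂ are prime differential ideals of A and 𝔮₁ is a prime differential ideal of B with 𝔮₁ ∩ A = 𝔭₁, then there is a prime differential ideal 𝔮₂ ⊇ 𝔮₁ of B with 𝔮₂ ∩ A = 𝔭₂. -/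
namespace IsDerivationFn

variable {R : Type*} [CommRing R] {d : R → R}

theorem map_zero_s8 (hd : IsDerivationFn d) : d 0 = 0 := by
  simpa using hd.1 0 0

theorem map_pow_succ (hd : IsDerivationFn d) (x : R) (n : ℕ) :
    d (x ^ (n + 1)) = ((n + 1 : ℕ) : R) * x ^ n * d x := by
  induction n with
  | zero => simp
  | succ n ih =>
    rw [pow_succ' x (n + 1), hd.2, ih]
    push_cast
    ring

end IsDerivationFn

theorem Ideal.mem_of_natCast_mul_mem {R : Type*} [CommRing R] [Algebra ℚ R] (I : Ideal R)
    {n : ℕ} (hn : n ≠ 0) {y : R} (h : (n : R) * y ∈ I) : y ∈ I := by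
  have hunit : IsUnit (n : R) := by
    simpa using (Ne.isUnit (Nat.cast_ne_zero.mpr hn : (n : ℚ) ≠ 0)).map (algebraMap ℚ R)
  exact (I.unit_mul_mem_iff_mem hunit).mp h

section Keigher

variable {R : Type*} [CommRing R] [Algebra ℚ R] {d : R → R} {I : Ideal R}

theorem pow_mul_deriv_mem_of_pow_succ_mem (hd : IsDerivationFn d) (hI : IsDiffIdeal d I)
    {x : R} {m : ℕ} (h : x ^ (m + 1) ∈ I) : x ^ m * d x ∈ I := by
  have hd' := hI _ h
  rw [hd.map_pow_succ, mul_assoc] at hd'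
  exact I.mem_of_natCast_mul_mem (Nat.succ_ne_zero m) hd'

theorem pow_mul_deriv_pow_add_two_mem (hd : IsDerivationFn d) (hI : IsDiffIdeal d I)
    {x : R} {s e : ℕ} (h : x ^ (s + 1) * d x ^ (e + 1) ∈ I) :
    x ^ s * d x ^ (e + 3) ∈ I := by
  have key : ((s + 1 : ℕ) : R) * (x ^ s * d x ^ (e + 3)) =
      d (x ^ (s + 1) * d x ^ (e + 1)) * d x -
        ((e + 1 : ℕ) : R) * d (d x) * (x ^ (s + 1) * d x ^ (e + 1)) := by
    rw [hd.2, hd.map_pow_succ, hd.map_pow_succ]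
    push_cast
    ring
  refine I.mem_of_natCast_mul_mem (Nat.succ_ne_zero s) ?_
  rw [key]
  exact I.sub_mem (I.mul_mem_right _ (hI _ h)) (I.mul_mem_left _ h)

theorem pow_mul_deriv_pow_mem (hd : IsDerivationFn d) (hI : IsDiffIdeal d I)
    {x : R} (k : ℕ) : ∀ {s : ℕ}, x ^ (s + k) * d x ∈ I → x ^ s * d x ^ (2 * k + 1) ∈ I := by
  induction k with
  | zero => simp
  | succ k ih =>
    intro s h
    rw [← add_assoc, add_right_comm] at h
    exact pow_mul_deriv_pow_add_two_mem hd hI (ih h)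

theorem isKeigher_of_algebra_rat (hd : IsDerivationFn d) : IsKeigher d := by
  refine ⟨hd, fun I hI x ⟨n, hn⟩ => ⟨2 * n + 1, ?_⟩⟩
  have hsucc : x ^ (n + 1) ∈ I := by
    rw [pow_succ']
    exact I.mul_mem_left x hn
  simpa using pow_mul_deriv_pow_mem hd hI n (s := 0)
    (by simpa using pow_mul_deriv_mem_of_pow_succ_mem hd hI hsucc)

end Keigher

section MinimalPrimes

variable {R : Type*} [CommRing R] {d : R → R}

theorem Ideal.exists_mul_mem_radical_of_mem_minimalPrimes {I p : Ideal R}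
    (hp : p ∈ I.minimalPrimes) {x : R} (hx : x ∈ p) : ∃ s ∉ p, s * x ∈ I.radical := by
  have := hp.isPrime
  have hloc : algebraMap R (Localization.AtPrime p) x ∈
      (I.map (algebraMap R (Localization.AtPrime p))).radical := by
    rw [IsLocalization.AtPrime.radical_map_of_mem_minimalPrimes
      (A := Localization.AtPrime p) p I hp]
    exact Ideal.mem_map_of_mem _ hx
  obtain ⟨n, hn⟩ := hloc
  rw [← map_pow, IsLocalization.algebraMap_mem_map_algebraMap_iff p.primeCompl] at hn
  obtain ⟨s, hs, hsx⟩ := hn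
  refine ⟨s, hs, n + 1, ?_⟩
  rw [show (s * x) ^ (n + 1) = s ^ n * x * (s * x ^ n) by ring]
  exact I.mul_mem_left _ hsx

theorem IsDiffIdeal.mul_deriv_mem (hd : IsDerivationFn d) {I : Ideal R} (hI : IsDiffIdeal d I)
    (hrad : I.IsRadical) {a b : R} (hab : a * b ∈ I) : a * d b ∈ I := by
  have hd' : a * d b + d a * b ∈ I := hd.2 a b ▸ hI _ hab
  refine hrad ⟨2, ?_⟩
  rw [show (a * d b) ^ 2 = a * d b * (a * d b + d a * b) - a * b * (d a * d b) by ring]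
  exact I.sub_mem (I.mul_mem_left _ hd') (I.mul_mem_right _ hab)

theorem IsKeigher.isDiffIdeal_of_mem_minimalPrimes (hK : IsKeigher d) {I p : Ideal R}
    (hI : IsDiffIdeal d I) (hp : p ∈ I.minimalPrimes) : IsDiffIdeal d p := by
  intro x hx
  have hprime := hp.isPrime
  obtain ⟨s, hs, hsx⟩ := Ideal.exists_mul_mem_radical_of_mem_minimalPrimes hp hx
  have hsdx := (hK.2 I hI).mul_deriv_mem hK.1 (Ideal.radical_isRadical I) hsx
  exact (hprime.mem_or_mem (hprime.radical_le_iff.mpr hp.le hsdx)).resolve_left hs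

theorem IsKeigher.exists_isPrime_isDiffIdeal_between (hK : IsKeigher d) {I q : Ideal R}
    [q.IsPrime] (hI : IsDiffIdeal d I) (hIq : I ≤ q) :
    ∃ q' : Ideal R, q'.IsPrime ∧ IsDiffIdeal d q' ∧ I ≤ q' ∧ q' ≤ q := by
  obtain ⟨q', hmin, hq'q⟩ := Ideal.exists_minimalPrimes_le hIq
  exact ⟨q', hmin.isPrime, hK.isDiffIdeal_of_mem_minimalPrimes hI hmin, hmin.le, hq'q⟩

end MinimalPrimes

theorem IsDiffIdeal.sup {R : Type*} [CommRing R] {d : R → R} (hd : IsDerivationFn d)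
    {I J : Ideal R} (hI : IsDiffIdeal d I) (hJ : IsDiffIdeal d J) : IsDiffIdeal d (I ⊔ J) := by
  intro x hx
  obtain ⟨y, hy, z, hz, rfl⟩ := Submodule.mem_sup.mp hx
  rw [hd.1]
  exact Ideal.add_mem _ (Ideal.mem_sup_left (hI y hy)) (Ideal.mem_sup_right (hJ z hz))

theorem IsDiffIdeal.map {A B : Type*} [CommRing A] [CommRing B] {dA : A → A} {dB : B → B}
    (hdB : IsDerivationFn dB) (f : A →+* B) (hf : ∀ a, f (dA a) = dB (f a)) {I : Ideal A}
    (hI : IsDiffIdeal dA I) : IsDiffIdeal dB (I.map f) := by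
  intro x hx
  induction hx using Submodule.span_induction with
  | mem y hy =>
    obtain ⟨a, ha, rfl⟩ := hy
    rw [← hf]
    exact Ideal.mem_map_of_mem f (hI a ha)
  | zero => simp [hdB.map_zero_s8]
  | add y z _ _ hy hz =>
    rw [hdB.1]
    exact Ideal.add_mem _ hy hz
  | smul r y hymem hy =>
    rw [smul_eq_mul, hdB.2]
    exact Ideal.add_mem _ (Ideal.mul_mem_left _ _ hy) (Ideal.mul_mem_left _ _ hymem)

theorem going_up_diff_integral_general
    {A B : Type*} [CommRing A] [CommRing B]
    [Algebra ℚ B] [Algebra A B] [Algebra.IsIntegral A B]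
    (dA : A → A) (dB : B → B) (hdB : IsDerivationFn dB)
    (hcompat : ∀ a : A, algebraMap A B (dA a) = dB (algebraMap A B a))
    (𝔭₁ 𝔭₂ : Ideal A) (h₂ : 𝔭₂.IsPrime) (h₁₂ : 𝔭₁ ≤ 𝔭₂)
    (h₂d : IsDiffIdeal dA 𝔭₂)
    (𝔮₁ : Ideal B) (hq₁d : IsDiffIdeal dB 𝔮₁)
    (hover : Ideal.comap (algebraMap A B) 𝔮₁ = 𝔭₁) :
    ∃ 𝔮₂ : Ideal B, 𝔮₂.IsPrime ∧ IsDiffIdeal dB 𝔮₂ ∧ 𝔮₁ ≤ 𝔮₂ ∧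
      Ideal.comap (algebraMap A B) 𝔮₂ = 𝔭₂ := by
  obtain ⟨𝔮, h𝔮₁𝔮, h𝔮, h𝔮_over⟩ :=
    Ideal.exists_ideal_over_prime_of_isIntegral 𝔭₂ 𝔮₁ (hover ▸ h₁₂)
  have hJ : IsDiffIdeal dB (𝔮₁ ⊔ 𝔭₂.map (algebraMap A B)) :=
    hq₁d.sup hdB (h₂d.map hdB _ hcompat)
  have hJ𝔮 : 𝔮₁ ⊔ 𝔭₂.map (algebraMap A B) ≤ 𝔮 :=
    sup_le h𝔮₁𝔮 (Ideal.map_le_iff_le_comap.mpr h𝔮_over.ge)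
  obtain ⟨𝔮₂, h𝔮₂, h𝔮₂d, hJ𝔮₂, h𝔮₂𝔮⟩ :=
    (isKeigher_of_algebra_rat hdB).exists_isPrime_isDiffIdeal_between hJ hJ𝔮
  refine ⟨𝔮₂, h𝔮₂, h𝔮₂d, le_sup_left.trans hJ𝔮₂, le_antisymm ?_ ?_⟩
  · exact h𝔮_over ▸ Ideal.comap_mono h𝔮₂𝔮
  · exact Ideal.map_le_iff_le_comap.mp (le_sup_right.trans hJ𝔮₂)

/-- going-up for prime differential ideals along integral extensions of
characteristic-zero differential domains. -/
theorem going_up_diff_integral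
    {A B : Type*} [CommRing A] [CommRing B] [IsDomain A] [IsDomain B]
    [Algebra ℚ A] [Algebra ℚ B] [Algebra A B] [Algebra.IsIntegral A B]
    (hinj : Function.Injective (algebraMap A B))
    (dA : A → A) (dB : B → B) (hdA : IsDerivationFn dA) (hdB : IsDerivationFn dB)
    (hcompat : ∀ a : A, algebraMap A B (dA a) = dB (algebraMap A B a))
    (𝔭₁ 𝔭₂ : Ideal A) (h₁ : 𝔭₁.IsPrime) (h₂ : 𝔭₂.IsPrime) (h₁₂ : 𝔭₁ ≤ 𝔭₂)
    (h₁d : IsDiffIdeal dA 𝔭₁) (h₂d : IsDiffIdeal dA 𝔭₂)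
    (𝔮₁ : Ideal B) (hq₁ : 𝔮₁.IsPrime) (hq₁d : IsDiffIdeal dB 𝔮₁)
    (hover : Ideal.comap (algebraMap A B) 𝔮₁ = 𝔭₁) :
    ∃ 𝔮₂ : Ideal B, 𝔮₂.IsPrime ∧ IsDiffIdeal dB 𝔮₂ ∧ 𝔮₁ ≤ 𝔮₂ ∧
      Ideal.comap (algebraMap A B) 𝔮₂ = 𝔭₂ :=
  going_up_diff_integral_general dA dB hdB hcompat 𝔭₁ 𝔭₂ h₂ h₁₂ h₂d 𝔮₁ hq₁d hover
end
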